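/- In the sub-affine λ¢, the calculus is not syntactically confluent: the closed term (λx.λy. if y then x else not x) coin, where not = λx. if x then 0 else 1, reduces to the normal distribution [(1/2, λy.if y then 0 else 1), (1/2, λy.if y then 1 else 0)] via one path and to [(1/4, λy.if y then 0 else 0), (1/4, λy.if y then 0 else 1), (1/4, λy.if y then 1 else 0), (1/4, λy.if y then 1 else 1)] via another, and these distributions are distinct. -/

import Mathlib

/-
Reducing the coin first yields `tenQFun 1` and `tenQFun 0` with weight 1/2 each; each β-reduces
to a deterministic boolean function `λy. if y then b else not b`. Reducing the β-redex first
instead copies the unevaluated coin into both branches of the `if`, and the two copies are then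
tossed independently, giving all four boolean functions with weight 1/4.

Both reductions are carried out branch by branch: a distribution supported in the range of a
context `C` reduces inside `C` without touching mass supported outside that range.
-/

/-- Terms of λ¢ (de Bruijn): variables, abstraction, application,
    booleans `one`/`zero`, if-then-else, and a coin. -/
inductive Tm : Type
  | var : Nat → Tm
  | lam : Tm → Tm
  | app : Tm → Tm → Tm
  | one : Tm
  | zero : Tm
  | ite : Tm → Tm → Tm → Tm
  | coin : Tm
  deriving DecidableEq

/-- Lifting of de Bruijn indices (indices ≥ d are incremented). -/
def lift (d : Nat) : Tm → Tm
  | .var n => if n < d then .var n else .var (n+1)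
  | .lam t => .lam (lift (d+1) t)
  | .app t u => .app (lift d t) (lift d u)
  | .one => .one
  | .zero => .zero
  | .ite c a b => .ite (lift d c) (lift d a) (lift d b)
  | .coin => .coin

/-- Capture-avoiding substitution `t[s/k]` (de Bruijn). -/
def subst : Tm → Nat → Tm → Tm
  | .var n, k, s => if n = k then s else if k < n then .var (n-1) else .var n
  | .lam t, k, s => .lam (subst t (k+1) (lift 0 s))
  | .app t u, k, s => .app (subst t k s) (subst u k s)
  | .one, _, _ => .one
  | .zero, _, _ => .zero
  | .ite c a b, k, s => .ite (subst c k s) (subst a k s) (subst b k s)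
  | .coin, _, _ => .coin

/-- One-step probabilistic reduction `t →_p r` of λ¢:
    β, if-rules (probability 1), coin toss (probability 1/2 each),
    closed under all contexts. -/
inductive Step : Tm → ℚ → Tm → Prop
  | beta (t r) : Step (.app (.lam t) r) 1 (subst t 0 r)
  | iteOne (a b) : Step (.ite .one a b) 1 a
  | iteZero (a b) : Step (.ite .zero a b) 1 b
  | coinOne : Step .coin (1/2) .one
  | coinZero : Step .coin (1/2) .zero
  | lam {t p t'} : Step t p t' → Step (.lam t) p (.lam t')
  | appL {t p t'} (u) : Step t p t' → Step (.app t u) p (.app t' u)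
  | appR {u p u'} (t) : Step u p u' → Step (.app t u) p (.app t u')
  | iteC {c p c'} (a b) : Step c p c' → Step (.ite c a b) p (.ite c' a b)
  | iteA {a p a'} (c b) : Step a p a' → Step (.ite c a b) p (.ite c a' b)
  | iteB {b p b'} (c a) : Step b p b' → Step (.ite c a b) p (.ite c a b')

/-- A term is normal if no probabilistic step applies. -/
def NormalTm (t : Tm) : Prop := ¬ ∃ p r, Step t p r

/-- (Sub)probability distributions over terms, as finitely supported maps. -/
abbrev PDist := Tm →₀ ℚ

/-- Contraction of one redex occurrence of a term, producing the
    distribution of its results: deterministic rules give a Dirac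
    distribution, a coin redex splits 1/2–1/2; closed under contexts. -/
inductive TStep : Tm → PDist → Prop
  | beta (t r) : TStep (.app (.lam t) r) (Finsupp.single (subst t 0 r) 1)
  | iteOne (a b) : TStep (.ite .one a b) (Finsupp.single a 1)
  | iteZero (a b) : TStep (.ite .zero a b) (Finsupp.single b 1)
  | coin : TStep .coin (Finsupp.single Tm.one (1/2) + Finsupp.single Tm.zero (1/2))
  | lam {t D} : TStep t D → TStep (.lam t) (D.mapDomain .lam)
  | appL {t D} (u) : TStep t D → TStep (.app t u) (D.mapDomain (fun s => .app s u))
  | appR {u D} (t) : TStep u D → TStep (.app t u) (D.mapDomain (fun s => .app t s))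
  | iteC {c D} (a b) : TStep c D → TStep (.ite c a b) (D.mapDomain (fun s => .ite s a b))
  | iteA {a D} (c b) : TStep a D → TStep (.ite c a b) (D.mapDomain (fun s => .ite c s b))
  | iteB {b D} (c a) : TStep b D → TStep (.ite c a b) (D.mapDomain (fun s => .ite c a s))

/-- One distribution-reduction step: pick a term `t` in the support,
    contract one redex occurrence of `t` and redistribute its probability
    mass accordingly (equal results are merged by the `Finsupp` addition). -/
def DStep (D D' : PDist) : Prop :=
  ∃ t E, D t ≠ 0 ∧ TStep t E ∧ D' = D.erase t + D t • E

/-- Multistep distribution reduction. -/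
def DSteps : PDist → PDist → Prop := Relation.ReflTransGen DStep

/-- A distribution is normal when every term in its support is normal. -/
def NormalDist (D : PDist) : Prop := ∀ t ∈ D.support, NormalTm t

/-- D₁ = [(1/2, λy.if y then 0 else 1), (1/2, λy.if y then 1 else 0)]. -/
noncomputable def D₁ : PDist :=
  Finsupp.single (Tm.lam (.ite (.var 0) .zero .one)) (1/2) +
  Finsupp.single (Tm.lam (.ite (.var 0) .one .zero)) (1/2)

/-- D₂ = the uniform distribution on the four terms λy.if y then a else b. -/
noncomputable def D₂ : PDist :=
  Finsupp.single (Tm.lam (.ite (.var 0) .zero .zero)) (1/4) +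
  Finsupp.single (Tm.lam (.ite (.var 0) .zero .one)) (1/4) +
  Finsupp.single (Tm.lam (.ite (.var 0) .one .zero)) (1/4) +
  Finsupp.single (Tm.lam (.ite (.var 0) .one .one)) (1/4)

/-- not = λx. if x then 0 else 1. -/
def notT : Tm := .lam (.ite (.var 0) .zero .one)

/-- (λx.λy. if y then x else not x) coin. -/
def tenQ : Tm :=
  .app (.lam (.lam (.ite (.var 0) (.var 1) (.app notT (.var 1))))) .coin

open Finsupp (single)

def lamIte (a b : Tm) : Tm := .lam (.ite (.var 0) a b)

def tenQFun : Tm := .lam (.lam (.ite (.var 0) (.var 1) (.app notT (.var 1))))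

instance : Trans DSteps DSteps DSteps := ⟨Relation.ReflTransGen.trans⟩

section DStep

variable {t : Tm} {p c : ℚ} {A A' B B' E R : PDist}

theorem DStep.of_single_add (hp : p ≠ 0) (hR : R t = 0) (h : TStep t E) :
    DStep (single t p + R) (R + p • E) := by
  refine ⟨t, E, by simp [hR, hp], h, ?_⟩
  have hR' : (single t p + R).erase t = R := by
    rw [Finsupp.erase_add, Finsupp.erase_single, zero_add,
      Finsupp.erase_of_notMem_support (by simpa using hR)]
  simp [hR', hR]

theorem DStep.exists_single_add (h : DStep A A') :
    ∃ t p E R, p ≠ 0 ∧ R t = 0 ∧ TStep t E ∧ A = single t p + R ∧ A' = R + p • E := by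
  obtain ⟨t, E, ht, hE, rfl⟩ := h
  refine ⟨t, A t, E, A.erase t, ht, Finsupp.erase_same, hE, ?_, rfl⟩
  rw [add_comm, Finsupp.erase_add_single]

theorem DStep.of_tStep (hp : p ≠ 0) (h : TStep t E) : DStep (single t p) (p • E) := by
  simpa using DStep.of_single_add hp (R := 0) rfl h

theorem DStep.of_tStep_single {s : Tm} (hp : p ≠ 0) (h : TStep t (single s 1)) :
    DStep (single t p) (single s p) := by
  simpa using DStep.of_tStep hp h

theorem DStep.add_right (h : DStep A A') (hB : Disjoint A.support B.support) :
    DStep (A + B) (A' + B) := by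
  obtain ⟨t, p, E, R, hp, hR, hE, rfl, rfl⟩ := h.exists_single_add
  have hBt : B t = 0 := by
    have : t ∈ (single t p + R).support := by simp [hR, hp]
    simpa using Finset.disjoint_left.mp hB this
  rw [add_assoc (single t p), add_right_comm R]
  exact DStep.of_single_add hp (by simp [hR, hBt]) hE

theorem DStep.add_left (h : DStep B B') (hA : Disjoint A.support B.support) :
    DStep (A + B) (A + B') := by
  simpa only [add_comm A] using h.add_right hA.symm

theorem DStep.smul (h : DStep A A') (hc : c ≠ 0) : DStep (c • A) (c • A') := by
  obtain ⟨t, p, E, R, hp, hR, hE, rfl, rfl⟩ := h.exists_single_add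
  simpa [smul_add, smul_smul] using DStep.of_single_add (mul_ne_zero hc hp) (by simp [hR]) hE

theorem DSteps.smul (h : DSteps A A') (hc : c ≠ 0) : DSteps (c • A) (c • A') := by
  induction h with
  | refl => exact .refl
  | tail _ hstep ih => exact ih.tail (hstep.smul hc)

end DStep

/-- Injectivity keeps distinct terms in the hole distinct, so that reduction commutes with
`mapDomain C`. -/
structure IsReductionContext (C : Tm → Tm) : Prop where
  injective : Function.Injective C
  tStep {t : Tm} {E : PDist} : TStep t E → TStep (C t) (E.mapDomain C)

namespace IsReductionContext

theorem lam : IsReductionContext .lam :=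
  ⟨fun _ _ h => by injection h, TStep.lam⟩

theorem appR (t : Tm) : IsReductionContext (.app t) :=
  ⟨fun _ _ h => by injection h, TStep.appR t⟩

theorem iteC (a b : Tm) : IsReductionContext (fun c => .ite c a b) :=
  ⟨fun _ _ h => by injection h, TStep.iteC a b⟩

theorem iteA (c b : Tm) : IsReductionContext (fun a => .ite c a b) :=
  ⟨fun _ _ h => by injection h, TStep.iteA c b⟩

theorem iteB (c a : Tm) : IsReductionContext (fun b => .ite c a b) :=
  ⟨fun _ _ h => by injection h, TStep.iteB c a⟩

theorem comp {C D : Tm → Tm} (hC : IsReductionContext C) (hD : IsReductionContext D) :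
    IsReductionContext (C ∘ D) :=
  ⟨hC.injective.comp hD.injective, fun h => by
    rw [Finsupp.mapDomain_comp]; exact hC.tStep (hD.tStep h)⟩

variable {C C₁ C₂ : Tm → Tm} {A A' B B' R : PDist}

theorem dStep_coin (hC : IsReductionContext C) :
    DStep (single (C .coin) 1) (single (C .one) (1 / 2) + single (C .zero) (1 / 2)) := by
  simpa [Finsupp.mapDomain_add] using DStep.of_tStep one_ne_zero (hC.tStep TStep.coin)

theorem dStep_mapDomain (hC : IsReductionContext C) (h : DStep A A') :
    DStep (A.mapDomain C) (A'.mapDomain C) := by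
  obtain ⟨t, p, E, R, hp, hR, hE, rfl, rfl⟩ := h.exists_single_add
  simpa [Finsupp.mapDomain_add, Finsupp.mapDomain_smul] using
    DStep.of_single_add hp (by rwa [Finsupp.mapDomain_apply hC.injective]) (hC.tStep hE)

theorem support_mapDomain_subset_range (A : PDist) :
    ↑(A.mapDomain C).support ⊆ Set.range C := by
  classical
  intro s hs
  obtain ⟨t, -, rfl⟩ := Finset.mem_image.mp (Finsupp.mapDomain_support hs)
  exact ⟨t, rfl⟩

theorem dSteps_mapDomain_add (hC : IsReductionContext C) (h : DSteps A A')
    (hR : Disjoint (Set.range C) ↑R.support) :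
    DSteps (A.mapDomain C + R) (A'.mapDomain C + R) := by
  induction h with
  | refl => exact .refl
  | tail _ hstep ih =>
    refine ih.tail ((hC.dStep_mapDomain hstep).add_right ?_)
    exact Finset.disjoint_coe.mp (hR.mono_left (support_mapDomain_subset_range _))

theorem dSteps_parallel (hC₁ : IsReductionContext C₁) (hC₂ : IsReductionContext C₂)
    (hC : Disjoint (Set.range C₁) (Set.range C₂)) (h₁ : DSteps A A') (h₂ : DSteps B B') :
    DSteps (A.mapDomain C₁ + B.mapDomain C₂) (A'.mapDomain C₁ + B'.mapDomain C₂) :=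
  calc
    DSteps _ (A'.mapDomain C₁ + B.mapDomain C₂) :=
      hC₁.dSteps_mapDomain_add h₁ (hC.mono_right (support_mapDomain_subset_range _))
    DSteps _ _ := by
      simpa only [add_comm (A'.mapDomain C₁)] using
        hC₂.dSteps_mapDomain_add h₂ (hC.symm.mono_right (support_mapDomain_subset_range _))

end IsReductionContext

theorem isReductionContext_lamIte_left (b : Tm) : IsReductionContext (lamIte · b) :=
  IsReductionContext.lam.comp (.iteA (.var 0) b)

theorem isReductionContext_lamIte_right (a : Tm) : IsReductionContext (lamIte a) :=
  IsReductionContext.lam.comp (.iteB (.var 0) a)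

theorem disjoint_range_lamIte_one_zero :
    Disjoint (Set.range (lamIte .one)) (Set.range (lamIte .zero)) :=
  Set.disjoint_range_iff.mpr fun _ _ h => by cases h

theorem tStep_notT_app (b : Tm) : TStep (.app notT b) (single (.ite b .zero .one) 1) :=
  TStep.beta _ b

theorem tStep_tenQFun_app {b : Tm} (hb : lift 0 b = b) :
    TStep (.app tenQFun b) (single (lamIte b (.app notT b)) 1) := by
  have hsubst : subst (.lam (.ite (.var 0) (.var 1) (.app notT (.var 1)))) 0 b =
      lamIte b (.app notT b) := by
    simp [subst, hb, lamIte, notT]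
  exact hsubst ▸ TStep.beta _ b

theorem dSteps_notT_one : DSteps (single (.app notT .one) 1) (single .zero 1) :=
  calc
    DSteps _ (single (.ite .one .zero .one) 1) :=
      .single (.of_tStep_single one_ne_zero (tStep_notT_app _))
    DSteps _ _ := .single (.of_tStep_single one_ne_zero (.iteOne _ _))

theorem dSteps_notT_zero : DSteps (single (.app notT .zero) 1) (single .one 1) :=
  calc
    DSteps _ (single (.ite .zero .zero .one) 1) :=
      .single (.of_tStep_single one_ne_zero (tStep_notT_app _))
    DSteps _ _ := .single (.of_tStep_single one_ne_zero (.iteZero _ _))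

theorem dSteps_notT_coin :
    DSteps (single (.app notT .coin) 1) (single .zero (1 / 2) + single .one (1 / 2)) :=
  calc
    DSteps _ (single (.ite .coin .zero .one) 1) :=
      .single (.of_tStep_single one_ne_zero (tStep_notT_app _))
    DSteps _ (single (.ite .one .zero .one) (1 / 2) + single (.ite .zero .zero .one) (1 / 2)) :=
      .single (IsReductionContext.iteC .zero .one).dStep_coin
    DSteps _ (single .zero (1 / 2) + single (.ite .zero .zero .one) (1 / 2)) :=
      .single ((DStep.of_tStep_single (by norm_num) (.iteOne _ _)).add_right (by simp))
    DSteps _ _ := .single ((DStep.of_tStep_single (by norm_num) (.iteZero _ _)).add_left (by simp))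

theorem dSteps_tenQ_D₁ : DSteps (single tenQ 1) D₁ :=
  calc
    DSteps _ (single (.app tenQFun .one) (1 / 2) + single (.app tenQFun .zero) (1 / 2)) :=
      .single (IsReductionContext.appR tenQFun).dStep_coin
    DSteps _ (single (lamIte .one (.app notT .one)) (1 / 2) +
        single (.app tenQFun .zero) (1 / 2)) :=
      .single ((DStep.of_tStep_single (by norm_num) (tStep_tenQFun_app rfl)).add_right (by simp))
    DSteps _ (single (lamIte .one (.app notT .one)) (1 / 2) +
        single (lamIte .zero (.app notT .zero)) (1 / 2)) :=
      .single ((DStep.of_tStep_single (by norm_num) (tStep_tenQFun_app rfl)).add_left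
        (by simp [lamIte]))
    DSteps _ _ := by
      have := IsReductionContext.dSteps_parallel (isReductionContext_lamIte_right .one)
        (isReductionContext_lamIte_right .zero) disjoint_range_lamIte_one_zero
        (dSteps_notT_one.smul (c := 1 / 2) (by norm_num))
        (dSteps_notT_zero.smul (c := 1 / 2) (by norm_num))
      simpa [D₁, lamIte, add_comm] using this

theorem dSteps_tenQ_D₂ : DSteps (single tenQ 1) D₂ :=
  calc
    DSteps _ (single (lamIte .coin (.app notT .coin)) 1) :=
      .single (.of_tStep_single one_ne_zero (tStep_tenQFun_app rfl))
    DSteps _ (single (lamIte .one (.app notT .coin)) (1 / 2) +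
        single (lamIte .zero (.app notT .coin)) (1 / 2)) :=
      .single (isReductionContext_lamIte_left _).dStep_coin
    DSteps _ _ := by
      have := IsReductionContext.dSteps_parallel (isReductionContext_lamIte_right .one)
        (isReductionContext_lamIte_right .zero) disjoint_range_lamIte_one_zero
        (dSteps_notT_coin.smul (c := 1 / 2) (by norm_num))
        (dSteps_notT_coin.smul (c := 1 / 2) (by norm_num))
      convert this using 1
      · simp [Finsupp.mapDomain_single]
      · simp only [D₂, smul_add, Finsupp.smul_single, smul_eq_mul, Finsupp.mapDomain_add,
          Finsupp.mapDomain_single]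
        norm_num [lamIte]
        abel

theorem normalTm_one : NormalTm .one := by
  rintro ⟨p, r, h⟩; cases h

theorem normalTm_zero : NormalTm .zero := by
  rintro ⟨p, r, h⟩; cases h

theorem NormalTm.lamIte {a b : Tm} (ha : NormalTm a) (hb : NormalTm b) :
    NormalTm (lamIte a b) := by
  rintro ⟨p, r, h⟩
  cases h with
  | lam h =>
    cases h with
    | iteC _ _ h => cases h
    | iteA _ _ h => exact ha ⟨_, _, h⟩
    | iteB _ _ h => exact hb ⟨_, _, h⟩

theorem NormalDist.single {t : Tm} (h : NormalTm t) (p : ℚ) : NormalDist (single t p) :=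
  fun _ hs => Finset.mem_singleton.mp (Finsupp.support_single_subset hs) ▸ h

theorem NormalDist.add {A B : PDist} (hA : NormalDist A) (hB : NormalDist B) :
    NormalDist (A + B) :=
  fun t ht => (Finset.mem_union.mp (Finsupp.support_add ht)).elim (hA t) (hB t)

theorem normalDist_D₁ : NormalDist D₁ :=
  (NormalDist.single (.lamIte normalTm_zero normalTm_one) _).add
    (NormalDist.single (.lamIte normalTm_one normalTm_zero) _)

theorem normalDist_D₂ : NormalDist D₂ :=
  (((NormalDist.single (.lamIte normalTm_zero normalTm_zero) _).add
    (NormalDist.single (.lamIte normalTm_zero normalTm_one) _)).add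
    (NormalDist.single (.lamIte normalTm_one normalTm_zero) _)).add
    (NormalDist.single (.lamIte normalTm_one normalTm_one) _)

theorem D₁_ne_D₂ : D₁ ≠ D₂ := fun h => by
  simpa [D₁, D₂, lamIte, Finsupp.single_apply] using DFunLike.congr_fun h (lamIte .one .one)

/-- the sub-affine λ¢ is not syntactically confluent:
    the term (λx.λy.if y then x else not x) coin reduces to the normal
    distribution D₁ via one path and to the normal distribution D₂ via
    another, and D₁ ≠ D₂. -/
theorem subaffine_not_syntactically_confluent :
    DSteps (Finsupp.single tenQ 1) D₁ ∧
    DSteps (Finsupp.single tenQ 1) D₂ ∧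
    NormalDist D₁ ∧ NormalDist D₂ ∧ D₁ ≠ D₂ :=
  ⟨dSteps_tenQ_D₁, dSteps_tenQ_D₂, normalDist_D₁, normalDist_D₂, D₁_ne_D₂⟩
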